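/- For every nonnegative integer l, ⟨vp(1/x), h_{2l}⟩ = 0 and ⟨vp(1/x), h_{2l+1}⟩ = 2π^{1/4} (2l+1)!^{1/2} Σ_{m=0}^{l} (1/(m!(l-m)!(2l-2m+1))) · (-1)^m/2^m. -/

import Mathlib

/-!
With `He_k = Polynomial.hermite k` the probabilists' Hermite polynomial, the Rodrigues formula
gives `h_k(x) = He_k(√2 x) e^{-x²/2} / (π^{1/4} √k!)`, hence `h_k(-x) = (-1)^k h_k(x)`.
For `k = 2l` the integrand `h_k(x)/x` is odd, so every truncated integral vanishes.
For `k = 2l + 1` the polynomial `He_k` is odd, so off the origin `h_k(x)/x` is an even polynomial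
times `e^{-x²/2}`. That function is integrable, so the truncated integrals converge to its
integral, computed termwise from the coefficients `(-1)^m (2m-1)‼ C(2l+1, 2m)` of `He_{2l+1}`
and the Gaussian moments `∫ x^{2j} e^{-x²/2} dx = √(2π) (2j-1)‼`.
-/

open MeasureTheory Filter

/-- The `k`-th Hermite function
`h_k(t) = ((-1)^k/(π^{1/4} 2^{k/2} (k!)^{1/2})) e^{t²/2} (d/dt)^k e^{-t²}`. -/
noncomputable def hermiteFun (k : ℕ) (t : ℝ) : ℝ :=
  ((-1 : ℝ) ^ k /
      (Real.pi ^ ((1 : ℝ) / 4) * (2 : ℝ) ^ ((k : ℝ) / 2) *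
        Real.sqrt (Nat.factorial k))) *
    Real.exp (t ^ 2 / 2) * iteratedDeriv k (fun s : ℝ => Real.exp (-s ^ 2)) t

open Real Polynomial Finset
open scoped Nat Topology

theorem Finset.sum_range_two_mul {M : Type*} [AddCommMonoid M] (f : ℕ → M) (n : ℕ) :
    ∑ i ∈ range (2 * n), f i = ∑ i ∈ range n, (f (2 * i) + f (2 * i + 1)) := by
  induction n with
  | zero => simp
  | succ n ih =>
    rw [mul_add, mul_one, sum_range_succ, sum_range_succ, sum_range_succ, ih, add_assoc]

theorem Nat.factorial_two_mul (n : ℕ) : (2 * n)! = 2 ^ n * n ! * (2 * n - 1)‼ := by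
  cases n with
  | zero => rfl
  | succ n =>
    rw [show 2 * (n + 1) = 2 * n + 1 + 1 by ring, factorial_eq_mul_doubleFactorial,
      show 2 * n + 1 + 1 = 2 * (n + 1) by ring, doubleFactorial_two_mul,
      show 2 * (n + 1) - 1 = 2 * n + 1 by omega]

theorem Nat.choose_mul_doubleFactorial_mul_doubleFactorial (m n : ℕ) :
    (2 * m + 2 * n + 1).choose (2 * m) * (2 * m - 1)‼ * (2 * n - 1)‼ *
      (2 ^ m * m ! * (2 ^ n * n ! * (2 * n + 1))) = (2 * m + 2 * n + 1)! := by
  have h := choose_mul_factorial_mul_factorial (show 2 * m ≤ 2 * m + 2 * n + 1 by omega)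
  rw [show 2 * m + 2 * n + 1 - 2 * m = 2 * n + 1 by omega, factorial_succ, factorial_two_mul,
    factorial_two_mul] at h
  rw [← h]
  ring

theorem Polynomial.aeval_hermite_two_mul_add_one {R : Type*} [Ring R] (l : ℕ) (y : R) :
    aeval y (hermite (2 * l + 1)) = ∑ m ∈ range (l + 1),
      (-1) ^ m * (2 * m - 1)‼ * (2 * l + 1).choose (2 * m) * y ^ (2 * (l - m) + 1) := by
  rw [aeval_eq_sum_range, natDegree_hermite, show 2 * l + 1 + 1 = 2 * (l + 1) by ring,
    sum_range_two_mul, ← sum_range_reflect]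
  refine sum_congr rfl fun m hm => ?_
  have hml : m ≤ l := Nat.lt_succ_iff.mp (mem_range.mp hm)
  have h_deg : 2 * l + 1 = 2 * m + (2 * (l - m) + 1) := by omega
  rw [coeff_hermite_of_odd_add ⟨l + (l - m), by omega⟩, zero_smul, zero_add,
    show l + 1 - 1 - m = l - m by omega, h_deg, coeff_hermite_explicit, ← Nat.choose_symm_add,
    ← h_deg, zsmul_eq_mul]
  push_cast
  rfl

theorem integrable_pow_mul_exp_neg_sq_div_two (n : ℕ) :
    Integrable fun x : ℝ => x ^ n * exp (-(x ^ 2 / 2)) := by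
  refine (integrable_rpow_mul_exp_neg_mul_sq (b := 1 / 2) (by norm_num) (s := n)
    (by linarith [n.cast_nonneg (α := ℝ)])).congr (.of_forall fun x => ?_)
  simp only [rpow_natCast]
  ring_nf

theorem integral_pow_two_mul_mul_exp_neg_sq_div_two (j : ℕ) :
    ∫ x : ℝ, x ^ (2 * j) * exp (-(x ^ 2 / 2)) = √(2 * π) * (2 * j - 1)‼ := by
  have h_even : (fun x : ℝ => x ^ (2 * j) * exp (-(x ^ 2 / 2))) =
      fun x => (fun t : ℝ => t ^ (2 * j) * exp (-(t ^ 2 / 2))) |x| := by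
    simp only [(even_two_mul j).pow_abs, sq_abs]
  have h_half_line : ∫ x in Set.Ioi (0 : ℝ), x ^ (2 * j) * exp (-(x ^ 2 / 2)) =
      ∫ x in Set.Ioi (0 : ℝ), x ^ ((2 * j : ℕ) : ℝ) * exp (-(1 / 2) * x ^ (2 : ℝ)) := by
    refine setIntegral_congr_fun measurableSet_Ioi fun x _ => ?_
    rw [rpow_natCast, rpow_two]
    ring_nf
  have h_exponent : (((2 * j : ℕ) : ℝ) + 1) / 2 = j + 1 / 2 := by push_cast; ring
  have h_scale : (1 / 2 : ℝ) ^ (-(((2 * j : ℕ) : ℝ) + 1) / 2) = 2 ^ j * √2 := by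
    rw [one_div, inv_rpow (by norm_num), ← rpow_neg (by norm_num), neg_div, neg_neg,
      h_exponent, rpow_add (by norm_num), rpow_natCast, sqrt_eq_rpow]
  rw [h_even, integral_comp_abs (f := fun t => t ^ (2 * j) * exp (-(t ^ 2 / 2))), h_half_line,
    integral_rpow_mul_exp_neg_mul_rpow (by norm_num) (by linarith [(2 * j).cast_nonneg (α := ℝ)])
      (by norm_num), h_scale, h_exponent, Gamma_nat_add_half, sqrt_mul zero_le_two]
  field_simp

section PrincipalValue

variable {E : Type*} [NormedAddCommGroup E] [NormedSpace ℝ E]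

theorem Function.Odd.integral_eq_zero {f : ℝ → E} (hf : f.Odd) : ∫ x, f x = 0 := by
  have h : -∫ x, f x = ∫ x, f x := by
    rw [← integral_neg, ← integral_neg_eq_self]
    simp_rw [hf.eq, neg_neg]
  have h2 : (2 : ℝ) • ∫ x, f x = 0 := by
    rw [two_smul]
    nth_rw 1 [← h]
    exact neg_add_cancel _
  exact (smul_eq_zero.mp h2).resolve_left two_ne_zero

theorem measurableSet_lt_abs (ε : ℝ) : MeasurableSet {x : ℝ | ε < |x|} :=
  measurableSet_lt measurable_const measurable_abs

theorem Function.Odd.setIntegral_lt_abs_eq_zero {f : ℝ → E} (hf : f.Odd) (ε : ℝ) :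
    ∫ x in {x : ℝ | ε < |x|}, f x = 0 := by
  rw [← integral_indicator (measurableSet_lt_abs ε)]
  refine Function.Odd.integral_eq_zero fun x => ?_
  simp only [Set.indicator, Set.mem_ofPred_eq, abs_neg, hf.eq]
  split_ifs <;> simp

theorem tendsto_setIntegral_lt_abs {f : ℝ → E} (hf : Integrable f) :
    Tendsto (fun ε => ∫ x in {x : ℝ | ε < |x|}, f x) (𝓝[>] 0) (𝓝 (∫ x, f x)) := by
  simp_rw [← integral_indicator (measurableSet_lt_abs _)]
  refine tendsto_integral_filter_of_dominated_convergence (fun x => ‖f x‖)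
    (.of_forall fun ε => hf.aestronglyMeasurable.indicator (measurableSet_lt_abs ε))
    (.of_forall fun ε => .of_forall fun x => norm_indicator_le_norm_self f x) hf.norm ?_
  filter_upwards [compl_mem_ae_iff.mpr (measure_singleton (0 : ℝ))] with x hx
  refine tendsto_const_nhds.congr' ?_
  filter_upwards [nhdsWithin_le_nhds (Iio_mem_nhds (abs_pos.2 hx))] with ε hε
  exact (Set.indicator_of_mem (s := {x : ℝ | ε < |x|}) hε f).symm

end PrincipalValue

theorem two_rpow_natCast_div_two (k : ℕ) : (2 : ℝ) ^ ((k : ℝ) / 2) = √2 ^ k := by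
  rw [sqrt_eq_rpow, ← rpow_natCast, ← rpow_mul zero_le_two]
  ring_nf

theorem hermiteFun_eq_aeval_hermite (k : ℕ) (x : ℝ) :
    hermiteFun k x = aeval (√2 * x) (hermite k) * exp (-(x ^ 2 / 2)) /
      (π ^ ((1 : ℝ) / 4) * √(k ! : ℝ)) := by
  have h_gauss : ContDiff ℝ k fun y : ℝ => exp (-(y ^ 2 / 2)) := by fun_prop
  have h_sq : ∀ s : ℝ, (√2 * s) ^ 2 / 2 = s ^ 2 := fun s => by
    rw [mul_pow, sq_sqrt zero_le_two]; ring
  have h_deriv : iteratedDeriv k (fun s : ℝ => exp (-s ^ 2)) x =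
      √2 ^ k * ((-1) ^ k * aeval (√2 * x) (hermite k) * exp (-x ^ 2)) := by
    have h_scaled : (fun s : ℝ => exp (-s ^ 2)) = fun s => exp (-((√2 * s) ^ 2 / 2)) :=
      funext fun s => by rw [h_sq]
    rw [h_scaled, iteratedDeriv_comp_const_mul h_gauss]
    beta_reduce
    rw [iteratedDeriv_eq_iterate, deriv_gaussian_eq_hermite_mul_gaussian, h_sq]
  have h_exp : exp (x ^ 2 / 2) * exp (-x ^ 2) = exp (-(x ^ 2 / 2)) := by
    rw [← exp_add]; ring_nf
  rw [hermiteFun, h_deriv, two_rpow_natCast_div_two, ← h_exp]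
  field_simp
  rw [← pow_mul, pow_mul', neg_one_sq, one_pow, one_mul]

theorem hermiteFun_neg (k : ℕ) (x : ℝ) : hermiteFun k (-x) = (-1) ^ k * hermiteFun k x := by
  have h := iteratedDeriv_comp_neg k (fun s : ℝ => exp (-s ^ 2)) (-x)
  simp only [neg_sq, neg_neg, smul_eq_mul] at h
  rw [hermiteFun, hermiteFun, neg_sq, h]
  ring

theorem hermiteFun_two_mul_div_odd (l : ℕ) : Function.Odd fun x => hermiteFun (2 * l) x / x :=
  fun x => by simp only [hermiteFun_neg, (even_two_mul l).neg_one_pow, one_mul, div_neg]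

theorem hermite_coeff_mul_gaussian_moment {l m : ℕ} (hml : m ≤ l) :
    (-1) ^ m * (2 * m - 1)‼ * (2 * l + 1).choose (2 * m) * √2 ^ (2 * (l - m) + 1) /
        (π ^ ((1 : ℝ) / 4) * √((2 * l + 1)! : ℝ)) * (√(2 * π) * (2 * (l - m) - 1)‼) =
      2 * π ^ ((1 : ℝ) / 4) * √((2 * l + 1)! : ℝ) *
        (1 / ((m ! : ℝ) * ((l - m)! : ℝ) * (2 * l - 2 * m + 1 : ℝ)) *
          ((-1 : ℝ) ^ m / 2 ^ m)) := by
  obtain ⟨n, rfl⟩ := Nat.exists_eq_add_of_le hml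
  have h_count : ((2 * (m + n) + 1).choose (2 * m) * (2 * m - 1)‼ * (2 * n - 1)‼ *
      (2 ^ m * m ! * (2 ^ n * n ! * (2 * n + 1))) : ℝ) = (2 * (m + n) + 1)! := by
    rw [mul_add]; exact_mod_cast Nat.choose_mul_doubleFactorial_mul_doubleFactorial m n
  have h_fact : √((2 * (m + n) + 1)! : ℝ) ^ 2 = (2 * (m + n) + 1)! := sq_sqrt (by positivity)
  have h_pi : (π ^ ((1 : ℝ) / 4)) ^ 2 = √π := by
    rw [← rpow_natCast, ← rpow_mul pi_pos.le, sqrt_eq_rpow]; norm_num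
  have h_two : √2 ^ (2 * n + 1) * √2 = 2 ^ (n + 1) := by
    rw [← pow_succ, show 2 * n + 1 + 1 = 2 * (n + 1) by ring, pow_mul, sq_sqrt zero_le_two]
  have h_lin : 2 * ((m + n : ℕ) : ℝ) - 2 * m + 1 = 2 * n + 1 := by push_cast; ring
  rw [Nat.add_sub_cancel_left, sqrt_mul zero_le_two, ← h_pi, h_lin]
  field_simp
  linear_combination ((2 * m - 1)‼ * (2 * (m + n) + 1).choose (2 * m) * (2 * n - 1)‼ *
    m ! * n ! * 2 ^ m * (2 * n + 1) : ℝ) * h_two + 2 * h_count - 2 * h_fact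

/-- The continuous extension of `x ↦ hermiteFun (2 * l + 1) x / x` across the origin. -/
noncomputable def hermiteFunOddDiv (l : ℕ) (x : ℝ) : ℝ :=
  ∑ m ∈ range (l + 1), (-1) ^ m * (2 * m - 1)‼ * (2 * l + 1).choose (2 * m) *
      √2 ^ (2 * (l - m) + 1) / (π ^ ((1 : ℝ) / 4) * √((2 * l + 1)! : ℝ)) *
    (x ^ (2 * (l - m)) * exp (-(x ^ 2 / 2)))

theorem hermiteFun_two_mul_add_one_div (l : ℕ) {x : ℝ} (hx : x ≠ 0) :
    hermiteFun (2 * l + 1) x / x = hermiteFunOddDiv l x := by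
  rw [hermiteFun_eq_aeval_hermite, aeval_hermite_two_mul_add_one, hermiteFunOddDiv, sum_mul,
    sum_div, sum_div]
  refine sum_congr rfl fun m _ => ?_
  rw [mul_pow, pow_succ x]
  field_simp

theorem integrable_hermiteFunOddDiv (l : ℕ) : Integrable (hermiteFunOddDiv l) :=
  integrable_finsetSum _ fun _ _ => (integrable_pow_mul_exp_neg_sq_div_two _).const_mul _

theorem integral_hermiteFunOddDiv (l : ℕ) :
    ∫ x, hermiteFunOddDiv l x = 2 * π ^ ((1 : ℝ) / 4) * √((2 * l + 1)! : ℝ) *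
      ∑ m ∈ range (l + 1), 1 / ((m ! : ℝ) * ((l - m)! : ℝ) * (2 * l - 2 * m + 1 : ℝ)) *
        ((-1 : ℝ) ^ m / 2 ^ m) := by
  simp only [hermiteFunOddDiv]
  rw [integral_finsetSum _ fun _ _ => (integrable_pow_mul_exp_neg_sq_div_two _).const_mul _,
    mul_sum]
  refine sum_congr rfl fun m hm => ?_
  rw [integral_const_mul, integral_pow_two_mul_mul_exp_neg_sq_div_two,
    hermite_coeff_mul_gaussian_moment (Nat.lt_succ_iff.mp (mem_range.mp hm))]

/-- `⟨vp(1/x), h_{2l}⟩ = 0` and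
`⟨vp(1/x), h_{2l+1}⟩ = 2π^{1/4} (2l+1)!^{1/2} Σ_{m=0}^{l} (-1)^m/(m!(l-m)!(2l-2m+1) 2^m)`. -/
theorem pv_pairing_hermiteFun (l : ℕ) :
    Tendsto (fun ε : ℝ => ∫ x in {x : ℝ | ε < |x|}, hermiteFun (2 * l) x / x)
      (nhdsWithin 0 (Set.Ioi 0)) (nhds 0) ∧
    Tendsto (fun ε : ℝ => ∫ x in {x : ℝ | ε < |x|}, hermiteFun (2 * l + 1) x / x)
      (nhdsWithin 0 (Set.Ioi 0))
      (nhds (2 * Real.pi ^ ((1 : ℝ) / 4) * Real.sqrt (Nat.factorial (2 * l + 1)) *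
        ∑ m ∈ Finset.range (l + 1),
          1 / ((Nat.factorial m : ℝ) * (Nat.factorial (l - m) : ℝ) *
              (2 * l - 2 * m + 1 : ℝ)) *
            ((-1 : ℝ) ^ m / 2 ^ m))) := by
  constructor
  · simp_rw [(hermiteFun_two_mul_div_odd l).setIntegral_lt_abs_eq_zero]
    exact tendsto_const_nhds
  · rw [← integral_hermiteFunOddDiv]
    refine (tendsto_setIntegral_lt_abs (integrable_hermiteFunOddDiv l)).congr' ?_
    filter_upwards [self_mem_nhdsWithin] with ε (hε : 0 < ε)
    refine setIntegral_congr_fun (measurableSet_lt_abs ε) fun x hx => ?_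
    exact (hermiteFun_two_mul_add_one_div l (abs_pos.mp (hε.trans hx))).symm
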